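/- arXiv:1811.10957 — 5 statements merged into one kernel-verified Lean document; each statement's English description precedes it below -/
import Mathlib

section
/- Let n ≥ 1 and d ≥ 1. For each i ∈ {1,…,n} and j ∈ {1,…,d}, let R_{ij} ∈ {1,…,n} be such that for each fixed j the map i ↦ R_{ij} is a bijection of {1,…,n} (ranks without ties). Define Ĉ_n(u) = (1/n) Σ_{i=1}^n Π_{j=1}^d 1(R_{ij}/n ≤ u_j) and the checkerboard extension C_n^#(u) = (1/n) Σ_{i=1}^n Π_{j=1}^d min(max(n u_j − R_{ij} + 1, 0), 1) for u ∈ [0,1]^d. Then sup_{u ∈ [0,1]^d} |C_n^#(u) − Ĉ_n(u)| ≤ d/n. -/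
open Finset

lemma prod_sub_prod_le_sum' {ι : Type*} (s : Finset ι) (f g : ι → ℝ)
    (h0 : ∀ j ∈ s, 0 ≤ g j) (h1 : ∀ j ∈ s, g j ≤ f j) (h2 : ∀ j ∈ s, f j ≤ 1) :
    ∏ j ∈ s, f j - ∏ j ∈ s, g j ≤ ∑ j ∈ s, (f j - g j) := by
  induction s using Finset.cons_induction with
  | empty => simp
  | cons a s ha ih =>
    simp only [Finset.prod_cons, Finset.sum_cons]
    have h0' : ∀ j ∈ s, 0 ≤ g j := fun j hj => h0 j (Finset.mem_cons_of_mem hj)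
    have h1' : ∀ j ∈ s, g j ≤ f j := fun j hj => h1 j (Finset.mem_cons_of_mem hj)
    have h2' : ∀ j ∈ s, f j ≤ 1 := fun j hj => h2 j (Finset.mem_cons_of_mem hj)
    have hga : 0 ≤ g a := h0 a (Finset.mem_cons_self a s)
    have hfa1 : f a ≤ 1 := h2 a (Finset.mem_cons_self a s)
    have hgfa : g a ≤ f a := h1 a (Finset.mem_cons_self a s)
    have hgprod0 : 0 ≤ ∏ j ∈ s, g j := Finset.prod_nonneg h0'
    have hgprod1 : ∏ j ∈ s, g j ≤ 1 :=
      Finset.prod_le_one h0' (fun j hj => le_trans (h1' j hj) (h2' j hj))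
    have hpp : ∏ j ∈ s, g j ≤ ∏ j ∈ s, f j := Finset.prod_le_prod h0' h1'
    have hih := ih h0' h1' h2'
    nlinarith [mul_le_of_le_one_left (sub_nonneg.2 hpp) hfa1,
      mul_le_of_le_one_right (sub_nonneg.2 hgfa) hgprod1]

/-- the empirical checkerboard copula is uniformly within `d/n`
of the rank-based empirical copula, in the absence of ties (ranks are a
bijection in each coordinate). Ranks are `(R i j : ℕ) + 1 ∈ {1,…,n}`. -/
theorem checkerboard_close_to_empirical_copula
    (n d : ℕ) (hn : 1 ≤ n) (hd : 1 ≤ d)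
    (R : Fin n → Fin d → Fin n)
    (hR : ∀ j : Fin d, Function.Bijective fun i => R i j)
    (u : Fin d → ℝ) (hu : ∀ j, u j ∈ Set.Icc (0:ℝ) 1) :
    |(1 / n : ℝ) * ∑ i : Fin n, ∏ j : Fin d,
        min (max ((n : ℝ) * u j - (((R i j : ℕ) : ℝ) + 1) + 1) 0) 1
      - (1 / n : ℝ) * ∑ i : Fin n, ∏ j : Fin d,
        (if (((R i j : ℕ) : ℝ) + 1) / n ≤ u j then (1:ℝ) else 0)|
      ≤ d / n := by
  have hn0 : (0:ℝ) < n := by exact_mod_cast hn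
  set F : Fin n → Fin d → ℝ := fun i j =>
    min (max ((n : ℝ) * u j - (((R i j : ℕ) : ℝ) + 1) + 1) 0) 1 with hF
  set G : Fin n → Fin d → ℝ := fun i j =>
    (if (((R i j : ℕ) : ℝ) + 1) / n ≤ u j then (1:ℝ) else 0) with hG
  have hG0 : ∀ i j, 0 ≤ G i j := by intro i j; simp only [hG]; positivity
  have hF1 : ∀ i j, F i j ≤ 1 := fun i j => min_le_right _ _
  have hGF : ∀ i j, G i j ≤ F i j := by
    intro i j
    simp only [hG, hF]
    split_ifs with h
    · have h1 : (1:ℝ) ≤ (n : ℝ) * u j - (((R i j : ℕ) : ℝ) + 1) + 1 := by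
        have := (div_le_iff₀ hn0).mp h
        nlinarith
      exact le_min (le_trans h1 (le_max_left _ _)) le_rfl
    · exact le_min (le_max_right _ _) zero_le_one
  -- per-coordinate bound
  have key : ∀ j : Fin d, ∑ i : Fin n, (F i j - G i j) ≤ 1 := by
    intro j
    set x : ℝ := (n : ℝ) * u j with hx
    have hx0 : 0 ≤ x := by
      have := (hu j).1; positivity
    set k0 : ℕ := ⌊x⌋.toNat with hk0
    have heq : ∑ i : Fin n, (F i j - G i j) = ∑ k : Fin n,
        (min (max (x - (((k : ℕ) : ℝ) + 1) + 1) 0) 1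
          - (if (((k : ℕ) : ℝ) + 1) / n ≤ u j then (1:ℝ) else 0)) := by
      exact Fintype.sum_bijective (fun i => R i j) (hR j) _ _ (fun i => rfl)
    rw [heq]
    have hterm : ∀ k : Fin n,
        (min (max (x - (((k : ℕ) : ℝ) + 1) + 1) 0) 1
          - (if (((k : ℕ) : ℝ) + 1) / n ≤ u j then (1:ℝ) else 0))
        ≤ (if (k : ℕ) = k0 then (1:ℝ) else 0) := by
      intro k
      have hdiv : ((((k : ℕ) : ℝ) + 1) / n ≤ u j) ↔ (((k : ℕ) : ℝ) + 1 ≤ x) := by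
        rw [div_le_iff₀ hn0, hx]; constructor <;> intro h <;> nlinarith
      by_cases hcase : ((k : ℕ) : ℝ) + 1 ≤ x
      · -- both equal 1
        have hf : min (max (x - (((k : ℕ) : ℝ) + 1) + 1) 0) 1 = 1 := by
          have : (1:ℝ) ≤ x - (((k : ℕ) : ℝ) + 1) + 1 := by linarith
          rw [max_eq_left (by linarith), min_eq_right this]
        rw [hf, if_pos (hdiv.mpr hcase)]
        split_ifs <;> norm_num
      · by_cases hcase2 : x ≤ ((k : ℕ) : ℝ)
        · have hf : min (max (x - (((k : ℕ) : ℝ) + 1) + 1) 0) 1 = 0 := by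
            rw [max_eq_right (by linarith), min_eq_left zero_le_one]
          rw [hf, if_neg (fun h => hcase (hdiv.mp h))]
          split_ifs <;> norm_num
        · -- k < x < k+1, so k = k0
          push_neg at hcase hcase2
          have hfloor : ⌊x⌋ = ((k : ℕ) : ℤ) := by
            rw [Int.floor_eq_iff]
            push_cast
            exact ⟨le_of_lt hcase2, by linarith⟩
          have hk : (k : ℕ) = k0 := by
            rw [hk0, hfloor, Int.toNat_natCast]
          rw [if_pos hk]
          have h1 : min (max (x - (((k : ℕ) : ℝ) + 1) + 1) 0) 1 ≤ 1 := min_le_right _ _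
          have h2 : (0:ℝ) ≤ (if (((k : ℕ) : ℝ) + 1) / n ≤ u j then (1:ℝ) else 0) := by positivity
          linarith
    calc _ ≤ ∑ k : Fin n, (if (k : ℕ) = k0 then (1:ℝ) else 0) :=
          Finset.sum_le_sum (fun k _ => hterm k)
      _ ≤ 1 := by
          rw [Finset.sum_boole]
          norm_cast
          apply Finset.card_le_one.mpr
          intro a ha b hb
          simp only [Finset.mem_filter] at ha hb
          exact Fin.ext (ha.2.trans hb.2.symm)
  -- assemble
  have hprodle : ∀ i, ∏ j : Fin d, G i j ≤ ∏ j : Fin d, F i j := fun i =>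
    Finset.prod_le_prod (fun j _ => hG0 i j) (fun j _ => hGF i j)
  have hsumle : ∑ i : Fin n, ∏ j : Fin d, G i j ≤ ∑ i : Fin n, ∏ j : Fin d, F i j :=
    Finset.sum_le_sum (fun i _ => hprodle i)
  have hmain : ∑ i : Fin n, ∏ j : Fin d, F i j - ∑ i : Fin n, ∏ j : Fin d, G i j ≤ d := by
    rw [← Finset.sum_sub_distrib]
    calc ∑ i : Fin n, (∏ j : Fin d, F i j - ∏ j : Fin d, G i j)
        ≤ ∑ i : Fin n, ∑ j : Fin d, (F i j - G i j) :=
          Finset.sum_le_sum (fun i _ => prod_sub_prod_le_sum' _ _ _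
            (fun j _ => hG0 i j) (fun j _ => hGF i j) (fun j _ => hF1 i j))
      _ = ∑ j : Fin d, ∑ i : Fin n, (F i j - G i j) := Finset.sum_comm
      _ ≤ ∑ _j : Fin d, (1:ℝ) := Finset.sum_le_sum (fun j _ => key j)
      _ = d := by simp
  rw [show (1 / n : ℝ) * ∑ i : Fin n, ∏ j : Fin d, F i j
      - (1 / n : ℝ) * ∑ i : Fin n, ∏ j : Fin d, G i j
      = (1 / n : ℝ) * (∑ i : Fin n, ∏ j : Fin d, F i j - ∑ i : Fin n, ∏ j : Fin d, G i j)
      by ring]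
  rw [abs_of_nonneg (mul_nonneg (by positivity) (sub_nonneg.2 hsumle))]
  calc (1 / n : ℝ) * (∑ i : Fin n, ∏ j : Fin d, F i j - ∑ i : Fin n, ∏ j : Fin d, G i j)
      ≤ (1 / n : ℝ) * d := by
        apply mul_le_mul_of_nonneg_left hmain (by positivity)
    _ = d / n := by ring
end

section
/- Let C : [0,1]^d → [0,1] be a copula (a d-dimensional distribution function with standard uniform margins), let g be the weight function g(u) = ⋀_{j=1}^d { u_j ∧ ⋁_{k≠j} (1 − u_k) }, and let Π(u) = Π_{j=1}^d u_j denote the independence copula. Then for all u ∈ [0,1]^d, |C(u) − Π(u)| ≤ d · g(u); in particular, the function u ↦ (C(u) − Π(u))/g(u)^ω (set to 0 where g = 0) is bounded on [0,1]^d for every ω ∈ [0,1]. -/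
/-- A `d`-dimensional copula: a distribution function on `[0,1]^d` which is
grounded, has standard uniform univariate margins, and is `d`-increasing
(nonnegative rectangle volumes). -/
structure Copula (d : ℕ) where
  toFun : (Fin d → ℝ) → ℝ
  grounded : ∀ u : Fin d → ℝ, (∀ j, u j ∈ Set.Icc (0:ℝ) 1) → (∃ j, u j = 0) →
    toFun u = 0
  margins : ∀ (j : Fin d) (t : ℝ), t ∈ Set.Icc (0:ℝ) 1 →
    toFun (Function.update (fun _ => (1:ℝ)) j t) = t
  rectangle : ∀ a b : Fin d → ℝ, (∀ j, 0 ≤ a j) → (∀ j, a j ≤ b j) → (∀ j, b j ≤ 1) →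
    0 ≤ ∑ s : Fin d → Bool,
        (-1 : ℝ) ^ (Finset.univ.filter fun j => s j = false).card *
          toFun (fun j => if s j then b j else a j)

lemma oneInc {d : ℕ} (C : Copula d) (v : Fin d → ℝ) (hv : ∀ l, v l ∈ Set.Icc (0:ℝ) 1)
    (k : Fin d) (a b : ℝ) (ha : 0 ≤ a) (hab : a ≤ b) (hb : b ≤ 1) :
    C.toFun (fun l => if l = k then a else v l) ≤ C.toFun (fun l => if l = k then b else v l) := by
  classical
  set lo : Fin d → ℝ := fun l => if l = k then a else 0 with hlo
  set hi : Fin d → ℝ := fun l => if l = k then b else v l with hhi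
  have hlo0 : ∀ l, 0 ≤ lo l := by
    intro l; by_cases h : l = k <;> simp [hlo, h, ha]
  have hlohi : ∀ l, lo l ≤ hi l := by
    intro l; by_cases h : l = k <;> simp [hlo, hhi, h, hab, (hv l).1]
  have hhi1 : ∀ l, hi l ≤ 1 := by
    intro l; by_cases h : l = k <;> simp [hhi, h, hb, (hv l).2]
  have hrect := C.rectangle lo hi hlo0 hlohi hhi1
  set f : (Fin d → Bool) → ℝ := fun s =>
    (-1 : ℝ) ^ (Finset.univ.filter fun j => s j = false).card *
      C.toFun (fun j => if s j then hi j else lo j) with hf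
  have hvert : ∀ s : Fin d → Bool, ∀ l, (if s l then hi l else lo l) ∈ Set.Icc (0:ℝ) 1 := by
    intro s l
    rcases hv l with ⟨h0, h1⟩
    by_cases hl : l = k <;> cases hsl : s l <;>
      simp [hlo, hhi, hl, hsl] <;> constructor <;> linarith
  have hzero : ∀ s : Fin d → Bool, (¬ ∀ m, m ≠ k → s m = true) → f s = 0 := by
    intro s hs
    push_neg at hs
    obtain ⟨m, hmk, hm⟩ := hs
    have hm' : s m = false := by simpa using hm
    have : C.toFun (fun j => if s j then hi j else lo j) = 0 := by
      apply C.grounded _ (hvert s)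
      exact ⟨m, by simp [hm', hlo, hmk]⟩
    simp [hf, this]
  have hfilter : (Finset.univ.filter fun s : Fin d → Bool => ∀ m, m ≠ k → s m = true)
      = {fun _ => true, Function.update (fun _ => true) k false} := by
    ext s
    simp only [Finset.mem_filter, Finset.mem_univ, true_and, Finset.mem_insert,
      Finset.mem_singleton]
    constructor
    · intro h
      cases hsk : s k
      · right
        funext m
        by_cases hm : m = k
        · subst hm; simp [hsk, Function.update_apply]
        · simp [Function.update_apply, hm, h m hm]
      · left
        funext m
        by_cases hm : m = k
        · subst hm; simp [hsk]
        · simp [h m hm]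
    · rintro (rfl | rfl) <;> intro m hm <;> simp [Function.update_apply, hm]
  have hne : (fun _ : Fin d => true) ≠ Function.update (fun _ => true) k false := by
    intro h
    have := congrFun h k
    simp at this
  have hsum : ∑ s : Fin d → Bool, f s
      = C.toFun hi - C.toFun (fun l => if l = k then a else v l) := by
    rw [← Finset.sum_subset (Finset.filter_subset
        (fun s : Fin d → Bool => ∀ m, m ≠ k → s m = true) Finset.univ)
        (fun s _ hs => hzero s (by simpa using hs))]
    rw [hfilter, Finset.sum_pair hne]
    have e1 : f (fun _ => true) = C.toFun hi := by
      simp [hf]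
    have e2 : f (Function.update (fun _ => true) k false)
        = - C.toFun (fun l => if l = k then a else v l) := by
      have hflt : (Finset.univ.filter fun j =>
          Function.update (fun _ => true) k false j = false) = {k} := by
        ext j; by_cases h : j = k <;> simp [Function.update_apply, h]
      have hargs : (fun j => if Function.update (fun _ => true) k false j then hi j else lo j)
          = fun l => if l = k then a else v l := by
        funext l; by_cases h : l = k <;> simp [Function.update_apply, h, hlo, hhi]
      rw [hf]
      simp only [hflt, hargs, Finset.card_singleton, pow_one]
      ring
    rw [e1, e2]; ring
  rw [hsum] at hrect
  linarith

lemma twoInc {d : ℕ} (C : Copula d) (v : Fin d → ℝ) (hv : ∀ l, v l ∈ Set.Icc (0:ℝ) 1)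
    (k m : Fin d) (hkm : m ≠ k) (a b c : ℝ) (ha : 0 ≤ a) (hab : a ≤ b) (hb : b ≤ 1)
    (hc : 0 ≤ c) (hc1 : c ≤ 1) :
    C.toFun (fun l => if l = k then b else if l = m then c else v l)
      + C.toFun (fun l => if l = k then a else if l = m then (1:ℝ) else v l)
    ≤ C.toFun (fun l => if l = k then b else if l = m then (1:ℝ) else v l)
      + C.toFun (fun l => if l = k then a else if l = m then c else v l) := by
  classical
  set lo : Fin d → ℝ := fun l => if l = k then a else if l = m then c else 0 with hlo
  set hi : Fin d → ℝ := fun l => if l = k then b else if l = m then (1:ℝ) else v l with hhi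
  have hlo0 : ∀ l, 0 ≤ lo l := by
    intro l; by_cases h : l = k <;> by_cases h2 : l = m <;> simp [hlo, h, h2, ha, hc, hkm]
  have hlohi : ∀ l, lo l ≤ hi l := by
    intro l; by_cases h : l = k <;> by_cases h2 : l = m <;>
      simp [hlo, hhi, h, h2, hab, hc1, (hv l).1, hkm]
  have hhi1 : ∀ l, hi l ≤ 1 := by
    intro l; by_cases h : l = k <;> by_cases h2 : l = m <;> simp [hhi, h, h2, hb, (hv l).2, hkm]
  have hrect := C.rectangle lo hi hlo0 hlohi hhi1
  set f : (Fin d → Bool) → ℝ := fun s =>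
    (-1 : ℝ) ^ (Finset.univ.filter fun j => s j = false).card *
      C.toFun (fun j => if s j then hi j else lo j) with hf
  have hvert : ∀ s : Fin d → Bool, ∀ l, (if s l then hi l else lo l) ∈ Set.Icc (0:ℝ) 1 := by
    intro s l
    rcases hv l with ⟨h0, h1⟩
    by_cases hl : l = k <;> by_cases hl2 : l = m <;> cases hsl : s l <;>
      simp [hlo, hhi, hl, hl2, hsl, hkm] <;> constructor <;> linarith
  have hzero : ∀ s : Fin d → Bool, (¬ ∀ l, l ≠ k → l ≠ m → s l = true) → f s = 0 := by
    intro s hs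
    push_neg at hs
    obtain ⟨l, hlk, hlm, hl⟩ := hs
    have hl' : s l = false := by simpa using hl
    have : C.toFun (fun j => if s j then hi j else lo j) = 0 := by
      apply C.grounded _ (hvert s)
      exact ⟨l, by simp [hl', hlo, hlk, hlm]⟩
    simp [hf, this]
  -- the four surviving vertices
  set s1 : Fin d → Bool := fun l => if l = k then true else if l = m then true else true with hs1
  set s2 : Fin d → Bool := fun l => if l = k then false else if l = m then true else true with hs2
  set s3 : Fin d → Bool := fun l => if l = k then true else if l = m then false else true with hs3
  set s4 : Fin d → Bool := fun l => if l = k then false else if l = m then false else true with hs4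
  have hvalk : ∀ x y : Bool, (fun l => if l = k then x else if l = m then y else true) k = x := by
    intro x y; simp
  have hvalm : ∀ x y : Bool, (fun l => if l = k then x else if l = m then y else true) m = y := by
    intro x y; simp [hkm]
  have h12 : s1 ≠ s2 := fun h => by have := congrFun h k; simp [hs1, hs2] at this
  have h13 : s1 ≠ s3 := fun h => by have := congrFun h m; simp [hs1, hs3, hkm] at this
  have h14 : s1 ≠ s4 := fun h => by have := congrFun h k; simp [hs1, hs4] at this
  have h23 : s2 ≠ s3 := fun h => by have := congrFun h k; simp [hs2, hs3] at this
  have h24 : s2 ≠ s4 := fun h => by have := congrFun h m; simp [hs2, hs4, hkm] at this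
  have h34 : s3 ≠ s4 := fun h => by have := congrFun h k; simp [hs3, hs4] at this
  have hfilter : (Finset.univ.filter fun s : Fin d → Bool => ∀ l, l ≠ k → l ≠ m → s l = true)
      = {s1, s2, s3, s4} := by
    ext s
    simp only [Finset.mem_filter, Finset.mem_univ, true_and, Finset.mem_insert,
      Finset.mem_singleton]
    constructor
    · intro h
      have hs : s = fun l => if l = k then s k else if l = m then s m else true := by
        funext l
        by_cases hl : l = k
        · simp [hl]
        · by_cases hl2 : l = m
          · simp [hl, hl2, hkm]
          · simp [hl, hl2, h l hl hl2]
      cases hk : s k <;> cases hm : s m <;> rw [hk, hm] at hs <;> simp [hs1, hs2, hs3, hs4, hs]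
    · rintro (rfl | rfl | rfl | rfl) <;> intro l hl hl2 <;> simp [hs1, hs2, hs3, hs4, hl, hl2]
  have hsum : ∑ s : Fin d → Bool, f s = f s1 + f s2 + f s3 + f s4 := by
    rw [← Finset.sum_subset (Finset.filter_subset
        (fun s : Fin d → Bool => ∀ l, l ≠ k → l ≠ m → s l = true) Finset.univ)
        (fun s _ hs => hzero s (by simpa using hs))]
    rw [hfilter]
    rw [Finset.sum_insert (by simp [h12, h13, h14]),
        Finset.sum_insert (by simp [h23, h24]),
        Finset.sum_pair h34]
    ring
  -- evaluate the four terms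
  have card1 : (Finset.univ.filter fun j => s1 j = false) = ∅ := by
    ext j; by_cases h : j = k <;> by_cases h2 : j = m <;> simp [hs1, h, h2]
  have card2 : (Finset.univ.filter fun j => s2 j = false) = {k} := by
    ext j; by_cases h : j = k <;> by_cases h2 : j = m <;> simp [hs2, h, h2, hkm, Ne.symm hkm]
  have card3 : (Finset.univ.filter fun j => s3 j = false) = {m} := by
    ext j; by_cases h : j = k <;> by_cases h2 : j = m <;>
      simp [hs3, h, h2, hkm, Ne.symm hkm]
  have card4 : (Finset.univ.filter fun j => s4 j = false) = {k, m} := by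
    ext j; by_cases h : j = k <;> by_cases h2 : j = m <;> simp [hs4, h, h2]
  have arg1 : (fun j => if s1 j then hi j else lo j) = hi := by
    funext j; by_cases h : j = k <;> by_cases h2 : j = m <;> simp [hs1, h, h2]
  have arg2 : (fun j => if s2 j then hi j else lo j)
      = fun l => if l = k then a else if l = m then (1:ℝ) else v l := by
    funext j; by_cases h : j = k <;> by_cases h2 : j = m <;> simp [hs2, hlo, hhi, h, h2, hkm, Ne.symm hkm]
  have arg3 : (fun j => if s3 j then hi j else lo j)
      = fun l => if l = k then b else if l = m then c else v l := by
    funext j; by_cases h : j = k <;> by_cases h2 : j = m <;> simp [hs3, hlo, hhi, h, h2, hkm, Ne.symm hkm]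
  have arg4 : (fun j => if s4 j then hi j else lo j)
      = fun l => if l = k then a else if l = m then c else v l := by
    funext j; by_cases h : j = k <;> by_cases h2 : j = m <;> simp [hs4, hlo, hhi, h, h2, hkm, Ne.symm hkm]
  have cardkm : ({k, m} : Finset (Fin d)).card = 2 := by
    rw [Finset.card_insert_of_notMem (by simp [Ne.symm hkm]), Finset.card_singleton]
  rw [hsum] at hrect
  rw [hf] at hrect
  simp only [card1, card2, card3, card4, arg1, arg2, arg3, arg4, cardkm,
    Finset.card_empty, Finset.card_singleton, pow_zero, pow_one, one_mul] at hrect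
  nlinarith [hrect]

lemma lipOne {d : ℕ} (C : Copula d) (k : Fin d) (a b : ℝ) (ha : 0 ≤ a) (hab : a ≤ b)
    (hb : b ≤ 1) :
    ∀ n : ℕ, ∀ v : Fin d → ℝ, (∀ l, v l ∈ Set.Icc (0:ℝ) 1) →
      (Finset.univ.filter fun l => l ≠ k ∧ v l ≠ 1).card ≤ n →
      C.toFun (fun l => if l = k then b else v l) - C.toFun (fun l => if l = k then a else v l)
        ≤ b - a := by
  classical
  intro n
  induction n with
  | zero =>
    intro v hv hcard
    have hall : ∀ l, l ≠ k → v l = 1 := by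
      intro l hl; by_contra h
      have hmem : l ∈ Finset.univ.filter (fun l => l ≠ k ∧ v l ≠ 1) := by simp [hl, h]
      have := Finset.card_pos.mpr ⟨l, hmem⟩; omega
    have e1 : (fun l => if l = k then b else v l) = Function.update (fun _ => (1:ℝ)) k b := by
      funext l; by_cases hl : l = k <;> simp [Function.update_apply, hl, hall l]
    have e2 : (fun l => if l = k then a else v l) = Function.update (fun _ => (1:ℝ)) k a := by
      funext l; by_cases hl : l = k <;> simp [Function.update_apply, hl, hall l]
    rw [e1, e2, C.margins k b ⟨le_trans ha hab, hb⟩, C.margins k a ⟨ha, le_trans hab hb⟩]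
  | succ n ih =>
    intro v hv hcard
    by_cases hex : ∃ m, m ≠ k ∧ v m ≠ 1
    · obtain ⟨m, hmk, hm1⟩ := hex
      set v' : Fin d → ℝ := fun l => if l = m then 1 else v l with hv'def
      have hv' : ∀ l, v' l ∈ Set.Icc (0:ℝ) 1 := by
        intro l; by_cases hl : l = m <;> simp [hv'def, hl, hv l, Set.mem_Icc.mp (hv l)]
      have hfeq : (Finset.univ.filter fun l => l ≠ k ∧ v' l ≠ 1)
          = (Finset.univ.filter fun l => l ≠ k ∧ v l ≠ 1).erase m := by
        ext l
        by_cases hl : l = m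
        · subst hl; simp [hv'def]
        · simp [hv'def, hl, Finset.mem_erase]
      have hmmem : m ∈ Finset.univ.filter (fun l => l ≠ k ∧ v l ≠ 1) := by simp [hmk, hm1]
      have hcard' : (Finset.univ.filter fun l => l ≠ k ∧ v' l ≠ 1).card ≤ n := by
        rw [hfeq, Finset.card_erase_of_mem hmmem]
        have := Finset.card_pos.mpr ⟨m, hmmem⟩
        omega
      have h2 := twoInc C v hv k m hmk a b (v m) ha hab hb (hv m).1 (hv m).2
      have e1 : ∀ x : ℝ, (fun l => if l = k then x else if l = m then v m else v l)
          = fun l => if l = k then x else v l := by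
        intro x; funext l
        by_cases h1 : l = k
        · simp [h1]
        · by_cases h2 : l = m
          · subst h2; simp [h1]
          · simp [h1, h2]
      have e2 : ∀ x : ℝ, (fun l => if l = k then x else if l = m then (1:ℝ) else v l)
          = fun l => if l = k then x else v' l := by
        intro x; funext l; by_cases h1 : l = k <;> simp [h1, hv'def]
      rw [e1 a, e1 b, e2 a, e2 b] at h2
      have hih := ih v' hv' hcard'
      linarith
    · push_neg at hex
      have hall : ∀ l, l ≠ k → v l = 1 := fun l hl => hex l hl
      have e1 : (fun l => if l = k then b else v l) = Function.update (fun _ => (1:ℝ)) k b := by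
        funext l; by_cases hl : l = k <;> simp [Function.update_apply, hl, hall l]
      have e2 : (fun l => if l = k then a else v l) = Function.update (fun _ => (1:ℝ)) k a := by
        funext l; by_cases hl : l = k <;> simp [Function.update_apply, hl, hall l]
      rw [e1, e2, C.margins k b ⟨le_trans ha hab, hb⟩, C.margins k a ⟨ha, le_trans hab hb⟩]

lemma raise {d : ℕ} (C : Copula d) (u : Fin d → ℝ) (hu : ∀ l, u l ∈ Set.Icc (0:ℝ) 1)
    (j : Fin d) (S : Finset (Fin d)) :
    C.toFun u ≤ C.toFun (fun l => if l ∈ S ∧ l ≠ j then 1 else u l) ∧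
    C.toFun (fun l => if l ∈ S ∧ l ≠ j then 1 else u l) - C.toFun u
      ≤ ∑ l ∈ S.erase j, (1 - u l) := by
  classical
  induction S using Finset.induction_on with
  | empty =>
    have e : (fun l => if l ∈ (∅ : Finset (Fin d)) ∧ l ≠ j then (1:ℝ) else u l) = u := by
      funext l; simp
    rw [e]; simp
  | @insert m S hm ih =>
    by_cases hmj : m = j
    · subst hmj
      have e : (fun l => if l ∈ insert m S ∧ l ≠ m then (1:ℝ) else u l)
          = fun l => if l ∈ S ∧ l ≠ m then 1 else u l := by
        funext l
        by_cases hl : l = m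
        · simp [hl]
        · simp [Finset.mem_insert, hl]
      have eE : (insert m S).erase m = S.erase m := by
        rw [Finset.erase_insert hm, Finset.erase_eq_of_notMem hm]
      rw [e, eE]; exact ih
    · set w : Fin d → ℝ := fun l => if l ∈ S ∧ l ≠ j then 1 else u l with hw
      have hwbox : ∀ l, w l ∈ Set.Icc (0:ℝ) 1 := by
        intro l; by_cases hl : l ∈ S ∧ l ≠ j <;> simp [hw, hl, hu l, Set.mem_Icc.mp (hu l)]
      have e1 : (fun l => if l ∈ insert m S ∧ l ≠ j then (1:ℝ) else u l)
          = fun l => if l = m then 1 else w l := by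
        funext l
        by_cases hl : l = m
        · subst hl; simp [Finset.mem_insert, hmj]
        · simp [hw, Finset.mem_insert, hl]
      have e2 : w = fun l => if l = m then u m else w l := by
        funext l
        by_cases hl : l = m
        · subst hl; simp [hw, hm]
        · simp [hl]
      have hmono : C.toFun (fun l => if l = m then u m else w l)
          ≤ C.toFun (fun l => if l = m then 1 else w l) :=
        oneInc C w hwbox m (u m) 1 (hu m).1 (hu m).2 le_rfl
      have hlip : C.toFun (fun l => if l = m then 1 else w l)
          - C.toFun (fun l => if l = m then u m else w l) ≤ 1 - u m := by
        have := lipOne C m (u m) 1 (hu m).1 (hu m).2 le_rfl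
          (Finset.univ.filter fun l => l ≠ m ∧ w l ≠ 1).card w hwbox le_rfl
        linarith
      have eE : (insert m S).erase j = insert m (S.erase j) :=
        Finset.erase_insert_of_ne hmj
      have hnm : m ∉ S.erase j := fun h => hm (Finset.mem_of_mem_erase h)
      rw [e1, eE, Finset.sum_insert hnm]
      rw [e2] at ih
      constructor
      · linarith [ih.1]
      · linarith [ih.2]

lemma copula_nonneg {d : ℕ} (hd : 2 ≤ d) (C : Copula d) (u : Fin d → ℝ)
    (hu : ∀ l, u l ∈ Set.Icc (0:ℝ) 1) : 0 ≤ C.toFun u := by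
  classical
  set k0 : Fin d := ⟨0, by omega⟩
  have h := oneInc C u hu k0 0 (u k0) le_rfl (hu k0).1 (hu k0).2
  have e1 : (fun l => if l = k0 then u k0 else u l) = u := by
    funext l; by_cases hl : l = k0 <;> simp [hl]
  have e2 : C.toFun (fun l => if l = k0 then (0:ℝ) else u l) = 0 := by
    apply C.grounded
    · intro l; by_cases hl : l = k0 <;> simp [hl, hu l, Set.mem_Icc.mp (hu l)]
    · exact ⟨k0, by simp⟩
  rw [e1, e2] at h
  exact h

lemma weier {d : ℕ} (u : Fin d → ℝ) (hu : ∀ l, u l ∈ Set.Icc (0:ℝ) 1)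
    (F : Finset (Fin d)) : 1 - ∑ l ∈ F, (1 - u l) ≤ ∏ l ∈ F, u l := by
  classical
  induction F using Finset.induction_on with
  | empty => simp
  | @insert x F hx ih =>
    rw [Finset.sum_insert hx, Finset.prod_insert hx]
    have hs : 0 ≤ ∑ l ∈ F, (1 - u l) :=
      Finset.sum_nonneg fun l _ => by linarith [(hu l).2]
    have h1 := (hu x).1
    have h2 := (hu x).2
    nlinarith [mul_le_mul_of_nonneg_left ih h1]

/-- The weight function `g(u) = ⋀_{j} { u_j ∧ ⋁_{k ≠ j} (1 − u_k) }` used in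
weighted empirical copula processes. -/
noncomputable def copulaWeight {d : ℕ} (u : Fin d → ℝ) : ℝ :=
  ⨅ j : Fin d, min (u j) (⨆ k : {k : Fin d // k ≠ j}, (1 - u (k : Fin d)))

lemma copula_bounds {d : ℕ} (C : Copula d) (u : Fin d → ℝ)
    (hu : ∀ l, u l ∈ Set.Icc (0:ℝ) 1) (j : Fin d) :
    u j - ∑ l ∈ Finset.univ.erase j, (1 - u l) ≤ C.toFun u ∧ C.toFun u ≤ u j := by
  classical
  have h := raise C u hu j Finset.univ
  have e : (fun l => if l ∈ (Finset.univ : Finset (Fin d)) ∧ l ≠ j then (1:ℝ) else u l)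
      = Function.update (fun _ => (1:ℝ)) j (u j) := by
    funext l; by_cases hl : l = j <;> simp [Function.update_apply, hl]
  rw [e, C.margins j (u j) (hu j)] at h
  exact ⟨by linarith [h.2], h.1⟩

lemma prod_bounds {d : ℕ} (u : Fin d → ℝ)
    (hu : ∀ l, u l ∈ Set.Icc (0:ℝ) 1) (j : Fin d) :
    u j - ∑ l ∈ Finset.univ.erase j, (1 - u l) ≤ ∏ l, u l ∧ (∏ l, u l) ≤ u j := by
  classical
  have hprod : ∏ l, u l = u j * ∏ l ∈ Finset.univ.erase j, u l :=
    (Finset.mul_prod_erase Finset.univ u (Finset.mem_univ j)).symm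
  have hP1 : ∏ l ∈ Finset.univ.erase j, u l ≤ 1 :=
    Finset.prod_le_one (fun l _ => (hu l).1) (fun l _ => (hu l).2)
  have hP0 : (0:ℝ) ≤ ∏ l ∈ Finset.univ.erase j, u l :=
    Finset.prod_nonneg fun l _ => (hu l).1
  have hW := weier u hu (Finset.univ.erase j)
  have hs : 0 ≤ ∑ l ∈ Finset.univ.erase j, (1 - u l) :=
    Finset.sum_nonneg fun l _ => by linarith [(hu l).2]
  constructor
  · rw [hprod]
    nlinarith [(hu j).1, (hu j).2, mul_le_mul_of_nonneg_left hW (hu j).1]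
  · rw [hprod]
    nlinarith [(hu j).1]

lemma weight_key {d : ℕ} (hd : 2 ≤ d) (C : Copula d) (u : Fin d → ℝ)
    (hu : ∀ l, u l ∈ Set.Icc (0:ℝ) 1) :
    |C.toFun u - ∏ l : Fin d, u l| ≤ d * copulaWeight u := by
  classical
  haveI : Nonempty (Fin d) := ⟨⟨0, by omega⟩⟩
  haveI : Nontrivial (Fin d) := Fin.nontrivial_iff_two_le.mpr hd
  obtain ⟨j, hj⟩ := exists_eq_ciInf_of_finite
    (f := fun j : Fin d => min (u j) (⨆ k : {k : Fin d // k ≠ j}, (1 - u (k : Fin d))))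
  set Sj : ℝ := ⨆ k : {k : Fin d // k ≠ j}, (1 - u (k : Fin d)) with hSj
  have hg : copulaWeight u = min (u j) Sj := hj.symm
  obtain ⟨k0, hk0⟩ := exists_ne j
  haveI : Nonempty {k : Fin d // k ≠ j} := ⟨⟨k0, hk0⟩⟩
  have hbdd : BddAbove (Set.range fun k : {k : Fin d // k ≠ j} => 1 - u (k : Fin d)) :=
    Set.Finite.bddAbove (Set.finite_range _)
  have hSle : ∀ k : Fin d, k ≠ j → 1 - u k ≤ Sj := fun k hk => le_ciSup hbdd ⟨k, hk⟩
  have hSnn : 0 ≤ Sj := le_trans (by linarith [(hu k0).2]) (hSle k0 hk0)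
  have hC := copula_bounds C u hu j
  have hP := prod_bounds u hu j
  have hC0 := copula_nonneg hd C u hu
  have hP0 : (0:ℝ) ≤ ∏ l, u l := Finset.prod_nonneg fun l _ => (hu l).1
  have hdR : (2:ℝ) ≤ (d:ℝ) := by exact_mod_cast hd
  rcases le_total (u j) Sj with hc | hc
  · -- g = u j
    have hge : copulaWeight u = u j := by rw [hg, min_eq_left hc]
    rw [hge]
    rw [abs_le]
    constructor
    · nlinarith [hC.2, hP.2, (hu j).1]
    · nlinarith [hC.2, hP.2, (hu j).1]
  · -- g = Sj
    have hge : copulaWeight u = Sj := by rw [hg, min_eq_right hc]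
    rw [hge]
    have hsum : ∑ l ∈ Finset.univ.erase j, (1 - u l) ≤ ((d - 1 : ℕ) : ℝ) * Sj := by
      have hcard : (Finset.univ.erase j).card = d - 1 := by
        rw [Finset.card_erase_of_mem (Finset.mem_univ j), Finset.card_univ, Fintype.card_fin]
      have := Finset.sum_le_card_nsmul (Finset.univ.erase j) (fun l => 1 - u l) Sj
        (fun l hl => hSle l (Finset.ne_of_mem_erase hl))
      rw [hcard] at this
      simpa [nsmul_eq_mul] using this
    have hdm1 : ((d - 1 : ℕ) : ℝ) ≤ (d:ℝ) := by
      exact_mod_cast Nat.sub_le d 1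
    have hsum' : ∑ l ∈ Finset.univ.erase j, (1 - u l) ≤ (d:ℝ) * Sj := by
      calc ∑ l ∈ Finset.univ.erase j, (1 - u l) ≤ ((d - 1 : ℕ) : ℝ) * Sj := hsum
        _ ≤ (d:ℝ) * Sj := mul_le_mul_of_nonneg_right hdm1 hSnn
    rw [abs_le]
    constructor
    · nlinarith [hC.2, hP.1]
    · nlinarith [hC.1, hP.2]

/-- every copula `C` satisfies `|C(u) − Π(u)| ≤ d·g(u)` where `Π` is the
independence copula; in particular `(C − Π)/g^ω` (set to `0` where `g = 0`) is
bounded on `[0,1]^d` for every `ω ∈ [0,1]`. -/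
theorem copula_sub_indep_le_weight
    (d : ℕ) (hd : 2 ≤ d) (C : Copula d) :
    (∀ u : Fin d → ℝ, (∀ j, u j ∈ Set.Icc (0:ℝ) 1) →
      |C.toFun u - ∏ j : Fin d, u j| ≤ d * copulaWeight u) ∧
    (∀ ω : ℝ, ω ∈ Set.Icc (0:ℝ) 1 → ∃ M : ℝ, ∀ u : Fin d → ℝ,
      (∀ j, u j ∈ Set.Icc (0:ℝ) 1) →
      |if copulaWeight u = 0 then (0:ℝ)
        else (C.toFun u - ∏ j : Fin d, u j) / (copulaWeight u) ^ ω| ≤ M) := by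
  classical
  haveI : Nonempty (Fin d) := ⟨⟨0, by omega⟩⟩
  haveI : Nontrivial (Fin d) := Fin.nontrivial_iff_two_le.mpr hd
  have hgnn : ∀ u : Fin d → ℝ, (∀ l, u l ∈ Set.Icc (0:ℝ) 1) → 0 ≤ copulaWeight u := by
    intro u hu
    apply le_ciInf
    intro j
    obtain ⟨k0, hk0⟩ := exists_ne j
    haveI : Nonempty {k : Fin d // k ≠ j} := ⟨⟨k0, hk0⟩⟩
    have hbdd : BddAbove (Set.range fun k : {k : Fin d // k ≠ j} => 1 - u (k : Fin d)) :=
      Set.Finite.bddAbove (Set.finite_range _)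
    refine le_min (hu j).1 (le_trans ?_ (le_ciSup hbdd ⟨k0, hk0⟩))
    linarith [(hu k0).2]
  have hgle1 : ∀ u : Fin d → ℝ, (∀ l, u l ∈ Set.Icc (0:ℝ) 1) → copulaWeight u ≤ 1 := by
    intro u hu
    have hbdd : BddBelow (Set.range fun j : Fin d =>
        min (u j) (⨆ k : {k : Fin d // k ≠ j}, (1 - u (k : Fin d)))) :=
      Set.Finite.bddBelow (Set.finite_range _)
    refine le_trans (ciInf_le hbdd (Classical.arbitrary (Fin d))) ?_
    exact le_trans (min_le_left _ _) (hu _).2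
  refine ⟨fun u hu => weight_key hd C u hu, fun ω hω => ⟨d, fun u hu => ?_⟩⟩
  split_ifs with h
  · simp
  · have hg : 0 < copulaWeight u := lt_of_le_of_ne (hgnn u hu) (Ne.symm h)
    have hpow : 0 < copulaWeight u ^ ω := Real.rpow_pos_of_pos hg ω
    rw [abs_div, abs_of_pos hpow, div_le_iff₀ hpow]
    have hkey := weight_key hd C u hu
    have hmono : copulaWeight u ≤ copulaWeight u ^ ω := by
      have := Real.rpow_le_rpow_of_exponent_ge hg (hgle1 u hu) hω.2 (y := 1)
      simpa [Real.rpow_one] using this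
    have hd0 : (0:ℝ) ≤ (d:ℝ) := by positivity
    calc |C.toFun u - ∏ j : Fin d, u j| ≤ d * copulaWeight u := hkey
      _ ≤ d * copulaWeight u ^ ω := mul_le_mul_of_nonneg_left hmono hd0
end

section
/- Under the no-ties assumption (for each j, the ranks R_{1j},…,R_{nj} form a permutation of {1,…,n}), the two empirical copulas C_n(u) = F_n(F_{n1}⁻(u₁),…,F_{nd}⁻(u_d)) and Ĉ_n(u) = (1/n) Σ_i Π_j 1(R_{ij}/n ≤ u_j) satisfy sup_{u ∈ [0,1]^d} |C_n(u) − Ĉ_n(u)| ≤ d/n. -/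
open Finset

private lemma prodIndicatorAux {d : ℕ} (p : Fin d → Prop) [DecidablePred p] :
    (∏ j : Fin d, (if p j then (1:ℝ) else 0)) = if ∀ j, p j then (1:ℝ) else 0 := by
  by_cases h : ∀ j, p j
  · rw [if_pos h]; exact Finset.prod_eq_one fun j _ => if_pos (h j)
  · rw [if_neg h]
    push_neg at h
    obtain ⟨j, hj⟩ := h
    exact Finset.prod_eq_zero (mem_univ j) (if_neg hj)

/-- under the no-ties assumption, the empirical copula
`C_n(u) = F_n(F_{n1}⁻(u₁),…,F_{nd}⁻(u_d))` (with generalized inverses computed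
in `EReal`, so that `inf ∅ = ∞` and `inf ℝ = −∞`) and the rank-based empirical
copula `Ĉ_n(u) = (1/n) Σ_i Π_j 1(R_{ij}/n ≤ u_j)` differ by at most `d/n`,
uniformly over `u ∈ [0,1]^d`. -/
theorem empirical_copulas_close
    (n d : ℕ) (hn : 1 ≤ n) (hd : 1 ≤ d)
    (X : Fin n → Fin d → ℝ)
    (hties : ∀ j : Fin d, Function.Injective fun i => X i j)
    (R : Fin n → Fin d → ℕ)
    (hR : ∀ i j, R i j = Nat.card {k : Fin n // X k j ≤ X i j})
    (Fmarg : Fin d → ℝ → ℝ)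
    (hF : ∀ j t, Fmarg j t = (Nat.card {i : Fin n // X i j ≤ t} : ℝ) / n)
    (Q : Fin d → ℝ → EReal)
    (hQ : ∀ j y, Q j y = sInf ((fun x : ℝ => (x : EReal)) '' {x : ℝ | y ≤ Fmarg j x}))
    (Fbar : (Fin d → EReal) → ℝ)
    (hFbar : ∀ q : Fin d → EReal,
      Fbar q = (Nat.card {i : Fin n // ∀ j, (X i j : EReal) ≤ q j} : ℝ) / n)
    (u : Fin d → ℝ) (hu : ∀ j, u j ∈ Set.Icc (0:ℝ) 1) :
    |Fbar (fun j => Q j (u j))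
      - (1 / n : ℝ) * ∑ i : Fin n, ∏ j : Fin d,
          (if (R i j : ℝ) / n ≤ u j then (1:ℝ) else 0)|
      ≤ d / n := by
  classical
  have hn0 : (0:ℝ) < n := by exact_mod_cast hn
  -- ranks as finset cards
  have hRc : ∀ i j, R i j = (univ.filter (fun k => X k j ≤ X i j)).card := by
    intro i j
    rw [hR, Nat.card_eq_fintype_card, Fintype.card_subtype]
  have hFc : ∀ j t, Fmarg j t = ((univ.filter (fun i => X i j ≤ t)).card : ℝ) / n := by
    intro j t
    rw [hF, Nat.card_eq_fintype_card, Fintype.card_subtype]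
  -- rank monotonicity
  have hmono : ∀ j (i k : Fin n), X i j ≤ X k j → R i j ≤ R k j := by
    intro j i k h
    rw [hRc, hRc]
    exact Finset.card_le_card (fun a ha => by
      simp only [mem_filter, mem_univ, true_and] at ha ⊢; exact ha.trans h)
  have hlt : ∀ j (i k : Fin n), X i j < X k j → R i j < R k j := by
    intro j i k h
    rw [hRc, hRc]
    apply Finset.card_lt_card
    constructor
    · exact fun a ha => by
        simp only [mem_filter, mem_univ, true_and] at ha ⊢; exact ha.trans h.le
    · intro hsub
      have := hsub (by simp : k ∈ univ.filter (fun a => X a j ≤ X k j))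
      simp only [mem_filter, mem_univ, true_and] at this
      exact absurd this (not_le.mpr h)
  have hle_iff : ∀ j (i k : Fin n), R i j ≤ R k j ↔ X i j ≤ X k j := by
    intro j i k
    constructor
    · intro h
      by_contra hx
      exact absurd (hlt j k i (not_le.mp hx)) (not_lt.mpr h)
    · exact hmono j i k
  have hR1 : ∀ i j, 1 ≤ R i j := by
    intro i j
    rw [hRc]
    exact Finset.card_pos.mpr ⟨i, by simp⟩
  have hRn : ∀ i j, R i j ≤ n := by
    intro i j
    rw [hRc]
    calc (univ.filter (fun k => X k j ≤ X i j)).card ≤ (univ : Finset (Fin n)).card :=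
          Finset.card_filter_le _ _
      _ = n := by simp
  have hinj : ∀ j, Function.Injective fun i => R i j := by
    intro j a b h
    simp only at h
    apply hties j
    simp only
    rcases lt_trichotomy (X a j) (X b j) with h1 | h1 | h1
    · exact absurd h (Nat.ne_of_lt (hlt j a b h1))
    · exact h1
    · exact absurd h.symm (Nat.ne_of_lt (hlt j b a h1))
  have hsurj : ∀ j, ∀ m, 1 ≤ m → m ≤ n → ∃ i, R i j = m := by
    intro j m hm1 hmn
    have hf : Function.Injective (fun i : Fin n => (⟨R i j - 1, by
        have := hR1 i j; have := hRn i j; omega⟩ : Fin n)) := by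
      intro a b h
      apply hinj j
      have := congrArg Fin.val h
      simp only at this
      have h1 := hR1 a j; have h2 := hR1 b j
      simp only; omega
    have hsf := (Finite.injective_iff_surjective).mp hf
    obtain ⟨i, hi⟩ := hsf ⟨m - 1, by omega⟩
    have := congrArg Fin.val hi
    simp only at this
    have := hR1 i j
    exact ⟨i, by omega⟩
  by_cases hz : ∃ j₀, u j₀ = 0
  · -- some coordinate is 0: both sides vanish
    obtain ⟨j₀, hj₀⟩ := hz
    have hsum : (∑ i : Fin n, ∏ j : Fin d,
        (if (R i j : ℝ) / n ≤ u j then (1:ℝ) else 0)) = 0 := by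
      apply Finset.sum_eq_zero
      intro i _
      apply Finset.prod_eq_zero (mem_univ j₀)
      rw [if_neg]
      rw [hj₀]
      push_neg
      apply div_pos _ hn0
      exact_mod_cast hR1 i j₀
    have hQbot : Q j₀ (u j₀) = ⊥ := by
      rw [hQ, hj₀]
      have hset : {x : ℝ | (0:ℝ) ≤ Fmarg j₀ x} = Set.univ := by
        ext x
        simp only [Set.mem_setOf_eq, Set.mem_univ, iff_true]
        rw [hF]
        positivity
      rw [hset]
      have hle : ∀ r : ℝ, sInf ((fun x : ℝ => (x : EReal)) '' Set.univ) ≤ (r : EReal) :=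
        fun r => sInf_le ⟨r, trivial, rfl⟩
      have key : ∀ a : EReal, (∀ r : ℝ, a ≤ (r : EReal)) → a = ⊥ := by
        intro a h
        induction a using EReal.rec with
        | bot => rfl
        | coe b =>
          have := h (b - 1)
          rw [EReal.coe_le_coe_iff] at this
          exfalso; linarith
        | top => exact absurd (h 0) (by simp)
      exact key _ hle
    have hFb0 : Fbar (fun j => Q j (u j)) = 0 := by
      rw [hFbar]
      have hE : IsEmpty {i : Fin n // ∀ j, (X i j : EReal) ≤ Q j (u j)} := by
        constructor
        rintro ⟨i, hi⟩
        have := hi j₀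
        rw [hQbot, le_bot_iff] at this
        exact EReal.coe_ne_bot _ this
      rw [Nat.card_of_isEmpty]
      simp
    rw [hFb0, hsum]
    simp only [mul_zero, sub_zero, abs_zero]
    positivity
  · push_neg at hz
    have hpos : ∀ j, 0 < u j := fun j => lt_of_le_of_ne (hu j).1 (Ne.symm (hz j))
    set m : Fin d → ℕ := fun j => ⌈(n:ℝ) * u j⌉₊ with hm
    set l : Fin d → ℕ := fun j => ⌊(n:ℝ) * u j⌋₊ with hl
    have hm1 : ∀ j, 1 ≤ m j := fun j =>
      Nat.one_le_ceil_iff.mpr (mul_pos hn0 (hpos j))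
    have hmn : ∀ j, m j ≤ n := by
      intro j
      apply Nat.ceil_le.mpr
      calc (n:ℝ) * u j ≤ (n:ℝ) * 1 := by
            exact mul_le_mul_of_nonneg_left (hu j).2 hn0.le
        _ = n := mul_one _
    have hlm : ∀ j, l j ≤ m j := fun j => Nat.floor_le_ceil _
    have hml : ∀ j, m j ≤ l j + 1 := fun j => Nat.ceil_le_floor_add_one _
    choose i₀ hi₀ using fun j => hsurj j (m j) (hm1 j) (hmn j)
    -- Q j (u j) is the order statistic of rank m j
    have hQeq : ∀ j, Q j (u j) = ((X (i₀ j) j : ℝ) : EReal) := by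
      intro j
      rw [hQ]
      apply le_antisymm
      · apply sInf_le
        refine ⟨X (i₀ j) j, ?_, rfl⟩
        simp only [Set.mem_setOf_eq]
        rw [hFc]
        have hcard : (univ.filter (fun k => X k j ≤ X (i₀ j) j)).card = m j := by
          rw [← hRc]; exact hi₀ j
        rw [hcard]
        rw [le_div_iff₀ hn0]
        calc u j * n = (n:ℝ) * u j := mul_comm _ _
          _ ≤ m j := Nat.le_ceil _
      · apply le_sInf
        rintro y ⟨x, hx, rfl⟩
        rw [EReal.coe_le_coe_iff]
        simp only [Set.mem_setOf_eq] at hx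
        rw [hFc, le_div_iff₀ hn0] at hx
        have hcard : m j ≤ (univ.filter (fun i => X i j ≤ x)).card := by
          apply Nat.ceil_le.mpr
          calc (n:ℝ) * u j = u j * n := mul_comm _ _
            _ ≤ _ := hx
        -- some i with X i j ≤ x has rank ≥ m j
        have hex : ∃ i ∈ univ.filter (fun i => X i j ≤ x), m j ≤ R i j := by
          by_contra hc
          push_neg at hc
          have himg : (univ.filter (fun i => X i j ≤ x)).image (fun i => R i j)
              ⊆ Finset.Icc 1 (m j - 1) := by
            intro b hb
            simp only [mem_image] at hb
            obtain ⟨i, hi, rfl⟩ := hb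
            have h1 := hR1 i j
            have h2 := hc i hi
            simp only [Finset.mem_Icc]
            omega
          have hci : ((univ.filter (fun i => X i j ≤ x)).image (fun i => R i j)).card
              = (univ.filter (fun i => X i j ≤ x)).card :=
            Finset.card_image_of_injective _ (hinj j)
          have := Finset.card_le_card himg
          rw [hci, Nat.card_Icc] at this
          have hm1j := hm1 j
          omega
        obtain ⟨i, hi, hri⟩ := hex
        simp only [mem_filter, mem_univ, true_and] at hi
        have : X (i₀ j) j ≤ X i j := by
          rw [← hle_iff j]
          rw [hi₀ j]
          exact hri
        linarith
    -- rewrite both sides as rank-based counts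
    set A : Finset (Fin n) := univ.filter (fun i => ∀ j, R i j ≤ m j) with hA
    set B : Finset (Fin n) := univ.filter (fun i => ∀ j, R i j ≤ l j) with hB
    have hFbarval : Fbar (fun j => Q j (u j)) = (A.card : ℝ) / n := by
      rw [hFbar]
      congr 2
      have hequiv : ∀ i : Fin n,
          (∀ j, (X i j : EReal) ≤ Q j (u j)) ↔ (∀ j, R i j ≤ m j) := by
        intro i
        constructor
        · intro h j
          have := h j
          rw [hQeq j, EReal.coe_le_coe_iff] at this
          rw [← hi₀ j]
          exact hmono j i (i₀ j) this
        · intro h j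
          rw [hQeq j, EReal.coe_le_coe_iff]
          rw [← hle_iff j]
          rw [hi₀ j]
          exact h j
      rw [Nat.card_congr (Equiv.subtypeEquivRight hequiv)]
      rw [Nat.card_eq_fintype_card, Fintype.card_subtype]
    have hsumval : (∑ i : Fin n, ∏ j : Fin d,
        (if (R i j : ℝ) / n ≤ u j then (1:ℝ) else 0)) = (B.card : ℝ) := by
      have hprod : ∀ i : Fin n, (∏ j : Fin d,
          (if (R i j : ℝ) / n ≤ u j then (1:ℝ) else 0))
          = if (∀ j, R i j ≤ l j) then (1:ℝ) else 0 := by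
        intro i
        rw [prodIndicatorAux]
        have : ∀ j, ((R i j : ℝ) / n ≤ u j ↔ R i j ≤ l j) := by
          intro j
          rw [div_le_iff₀ hn0]
          rw [Nat.le_floor_iff (mul_nonneg hn0.le (hu j).1)]
          rw [mul_comm (n:ℝ) (u j)]
        simp only [this]
      simp only [hprod]
      rw [Finset.sum_boole]
    have hBA : B ⊆ A := by
      intro i hi
      simp only [hA, hB, mem_filter, mem_univ, true_and] at hi ⊢
      exact fun j => (hi j).trans (hlm j)
    have hdiff : (A \ B).card ≤ d := by
      have hsub : A \ B ⊆ univ.biUnion (fun j => univ.filter (fun i => R i j = m j)) := by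
        intro i hi
        simp only [mem_sdiff, hA, hB, mem_filter, mem_univ, true_and] at hi
        obtain ⟨h1, h2⟩ := hi
        push_neg at h2
        obtain ⟨j, hj⟩ := h2
        simp only [mem_biUnion, mem_filter, mem_univ, true_and]
        refine ⟨j, ?_⟩
        have := h1 j
        have := hml j
        omega
      calc (A \ B).card ≤ _ := Finset.card_le_card hsub
        _ ≤ ∑ j : Fin d, (univ.filter (fun i => R i j = m j)).card :=
            Finset.card_biUnion_le
        _ ≤ ∑ j : Fin d, 1 := by
            apply Finset.sum_le_sum
            intro j _
            apply Finset.card_le_one.mpr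
            intro a ha b hb
            simp only [mem_filter, mem_univ, true_and] at ha hb
            exact hinj j (ha.trans hb.symm)
        _ = d := by simp
    have hcards : A.card ≤ B.card + d := by
      have := Finset.card_sdiff_add_card_eq_card hBA
      omega
    have hcardsBA : B.card ≤ A.card := Finset.card_le_card hBA
    rw [hFbarval, hsumval]
    rw [abs_of_nonneg]
    · rw [one_div, inv_mul_eq_div, div_sub_div_same, div_le_div_iff₀ hn0 hn0]
      have h1 : (A.card : ℝ) - B.card ≤ d := by
        have : (A.card : ℝ) ≤ B.card + d := by exact_mod_cast hcards
        linarith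
      nlinarith [hn0.le, h1]
    · rw [one_div, inv_mul_eq_div, sub_nonneg, div_le_div_iff₀ hn0 hn0]
      have : (B.card : ℝ) ≤ A.card := by exact_mod_cast hcardsBA
      nlinarith [hn0.le]
end

section
/- Let R : {1,…,n} → {1,…,n} be a bijection in each coordinate; define the empirical beta copula C_n^β(u) = (1/n) Σ_{i=1}^n Π_{j=1}^d F_{n,R_{ij}}(u_j), where F_{n,r} is the c.d.f. of the Beta(r, n+1−r) distribution. Then each univariate margin of C_n^β is the identity on [0,1]: for every j and every t ∈ [0,1], C_n^β(1,…,1,t,1,…,1) (t in position j) equals t. -/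
/-!
Every coordinate of the point `(1, …, t, …, 1)` other than the `j`-th contributes the factor
`F_{n,r}(1) = 1`, so the copula reduces to `(1/n) Σ_i F_{n,R_{ij}}(t)`, and since `i ↦ R_{ij}` is a
permutation this is `(1/n) Σ_{r=1}^n F_{n,r}(t)`. Writing `F_{n,r}(t)` as the tail
`Σ_{s ≥ r} b_{n,s}(t)` of the Bernstein basis, the sum over `r` counts each `b_{n,s}` exactly `s`
times, giving the binomial mean `Σ_s s b_{n,s}(t) = n t`.
-/

/-- The c.d.f. of the Beta(r, n+1−r) distribution (the distribution of the r-th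
order statistic of n i.i.d. standard uniforms):
`F_{n,r}(t) = Σ_{s=r}^n C(n,s) t^s (1−t)^{n−s}`. -/
noncomputable def betaOrderCdf (n r : ℕ) (t : ℝ) : ℝ :=
  ∑ s ∈ Finset.Icc r n, (n.choose s : ℝ) * t ^ s * (1 - t) ^ (n - s)

open Finset Polynomial

lemma sum_range_sum_Icc_add_one {M : Type*} [AddCommMonoid M] (n : ℕ) (f : ℕ → M) :
    ∑ r ∈ range n, ∑ s ∈ Icc (r + 1) n, f s = ∑ s ∈ range (n + 1), s • f s := by
  rw [sum_comm' (t' := range (n + 1)) (s' := range) (by intro r s; simp only [mem_range, mem_Icc]; omega)]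
  simp only [sum_const, card_range]

lemma betaOrderCdf_eq_sum_bernsteinPolynomial (n r : ℕ) (t : ℝ) :
    betaOrderCdf n r t = ∑ s ∈ Icc r n, (bernsteinPolynomial ℝ n s).eval t := by
  simp [betaOrderCdf, bernsteinPolynomial]

lemma betaOrderCdf_one {n r : ℕ} (hr : r ≤ n) : betaOrderCdf n r 1 = 1 := by
  rw [betaOrderCdf, sum_eq_single_of_mem n (mem_Icc.mpr ⟨hr, le_rfl⟩)]
  · simp
  · intro s hs hsn
    have : n - s ≠ 0 := by
      rw [mem_Icc] at hs
      omega
    simp [this]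

lemma sum_betaOrderCdf_add_one (n : ℕ) (t : ℝ) :
    ∑ r ∈ range n, betaOrderCdf n (r + 1) t = n * t := by
  simp_rw [betaOrderCdf_eq_sum_bernsteinPolynomial, sum_range_sum_Icc_add_one]
  simpa [eval_finsetSum] using congr_arg (eval t) (bernsteinPolynomial.sum_smul ℝ n)

theorem empirical_beta_copula_margin_general
    (n d : ℕ) (hn : 1 ≤ n)
    (R : Fin n → Fin d → Fin n)
    (hR : ∀ j : Fin d, Function.Bijective fun i => R i j)
    (j : Fin d) (t : ℝ) :
    (1 / n : ℝ) * ∑ i : Fin n, ∏ j' : Fin d,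
        betaOrderCdf n ((R i j' : ℕ) + 1) (Function.update (fun _ => (1:ℝ)) j t j')
      = t := by
  have hprod : ∀ i : Fin n, ∏ j' : Fin d,
      betaOrderCdf n ((R i j' : ℕ) + 1) (Function.update (fun _ => (1:ℝ)) j t j')
        = betaOrderCdf n ((R i j : ℕ) + 1) t := by
    intro i
    rw [Fintype.prod_eq_single j fun j' hj' => ?_, Function.update_self]
    rw [Function.update_of_ne hj']
    exact betaOrderCdf_one (R i j').isLt
  have hsum : ∑ i : Fin n, betaOrderCdf n ((R i j : ℕ) + 1) t = n * t := by
    rw [Fintype.sum_bijective _ (hR j) _ (fun r : Fin n => betaOrderCdf n ((r : ℕ) + 1) t)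
      (fun _ => rfl), Fin.sum_univ_eq_sum_range (fun r => betaOrderCdf n (r + 1) t),
      sum_betaOrderCdf_add_one]
  have hn0 : (n : ℝ) ≠ 0 := Nat.cast_ne_zero.mpr (by omega)
  rw [Fintype.sum_congr _ _ hprod, hsum]
  field_simp

/-- the empirical beta copula
`C_n^β(u) = (1/n) Σ_i Π_j F_{n,R_{ij}}(u_j)` (ranks `R_{ij} = (R i j) + 1`
forming a permutation in each coordinate) has standard uniform margins:
evaluating at the point with `t` in position `j` and `1` elsewhere gives `t`. -/
theorem empirical_beta_copula_margin
    (n d : ℕ) (hn : 1 ≤ n)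
    (R : Fin n → Fin d → Fin n)
    (hR : ∀ j : Fin d, Function.Bijective fun i => R i j)
    (j : Fin d) (t : ℝ) (ht : t ∈ Set.Icc (0:ℝ) 1) :
    (1 / n : ℝ) * ∑ i : Fin n, ∏ j' : Fin d,
        betaOrderCdf n ((R i j' : ℕ) + 1) (Function.update (fun _ => (1:ℝ)) j t j')
      = t :=
  empirical_beta_copula_margin_general n d hn R hR j t
end

section
/- For an extreme-value copula C with continuous Pickands dependence function A and any w = (w₁,…,w_d) in the simplex, ∫₀¹ { C(u^{w₁},…,u^{w_d}) − 1(u ∈ [e^{−1},1]) } du/(u ln u) = γ + ln A(w), where γ is the Euler–Mascheroni constant; i.e., ν(C)(w) = exp[ −γ + ∫₀¹ { C(u^{w₁},…,u^{w_d}) − 1(u ∈ [e^{−1},1]) } du/(u ln u) ] = A(w). -/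
open MeasureTheory Set Filter Real Topology

local notation "γ" => Real.eulerMascheroniConstant

private lemma aux_phi_eq {a : ℝ} (ha : 0 < a) {s : ℝ} (hs : 0 < s) :
    ∫ t in Ioi (0:ℝ),
        t ^ (s-1) * (rexp (-(a*t)) - (Ioc (0:ℝ) 1).indicator (fun _ => (1:ℝ)) t)
      = (1/a) ^ s * Real.Gamma s - 1/s := by
  have h1 : IntegrableOn (fun t : ℝ => t ^ (s-1) * rexp (-(a*t))) (Ioi 0) := by
    have := integrableOn_rpow_mul_exp_neg_mul_rpow (p := 1) (s := s-1) (b := a)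
      (by linarith) zero_lt_one ha
    refine this.congr_fun (fun t ht => ?_) measurableSet_Ioi
    simp only [Real.rpow_one]; ring_nf
  have h2' : IntegrableOn (fun t : ℝ => t ^ (s-1)) (Ioc (0:ℝ) 1) := by
    have := intervalIntegral.intervalIntegrable_rpow' (a := 0) (b := 1) (r := s-1)
      (by linarith)
    exact (intervalIntegrable_iff_integrableOn_Ioc_of_le zero_le_one).mp this
  have h2 : IntegrableOn (fun t : ℝ => (Ioc (0:ℝ) 1).indicator (fun t => t ^ (s-1)) t)
      (Ioi 0) := (h2'.integrable_indicator measurableSet_Ioc).integrableOn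
  have heq : ∀ t ∈ Ioi (0:ℝ),
      t ^ (s-1) * (rexp (-(a*t)) - (Ioc (0:ℝ) 1).indicator (fun _ => (1:ℝ)) t)
        = t ^ (s-1) * rexp (-(a*t)) - (Ioc (0:ℝ) 1).indicator (fun t => t ^ (s-1)) t := by
    intro t _
    by_cases ht : t ∈ Ioc (0:ℝ) 1 <;> simp [ht, mul_sub]
  rw [setIntegral_congr_fun measurableSet_Ioi heq, integral_sub h1 h2,
    Real.integral_rpow_mul_exp_neg_mul_Ioi hs ha,
    setIntegral_indicator measurableSet_Ioc,
    inter_eq_self_of_subset_right Ioc_subset_Ioi_self,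
    ← intervalIntegral.integral_of_le zero_le_one,
    integral_rpow (Or.inl (by linarith))]
  rw [sub_add_cancel, Real.one_rpow, Real.zero_rpow hs.ne']
  ring

private lemma aux_tendsto_rhs {a : ℝ} (ha : 0 < a) :
    Tendsto (fun s : ℝ => (1/a) ^ s * Real.Gamma s - 1/s) (𝓝[>] 0)
      (𝓝 (-Real.log a - γ)) := by
  set h : ℝ → ℝ := fun s => (1/a) ^ s * Real.Gamma (s+1) with hh_def
  have hd : HasDerivAt h (-Real.log a - γ) 0 := by
    have h1 : HasDerivAt (fun s : ℝ => (1/a : ℝ) ^ s)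
        (Real.log (1/a) * (1/a : ℝ) ^ (0:ℝ)) 0 := by
      have hb : (0:ℝ) < 1/a := by positivity
      have hin : HasDerivAt (fun s : ℝ => Real.log (1/a) * s) (Real.log (1/a)) 0 := by
        simpa using (hasDerivAt_id (0:ℝ)).const_mul (Real.log (1/a))
      have : HasDerivAt (fun s : ℝ => rexp (Real.log (1/a) * s))
          (rexp (Real.log (1/a) * 0) * Real.log (1/a)) 0 := hin.exp
      refine (this.congr_deriv ?_).congr_of_eventuallyEq ?_
      · rw [Real.rpow_def_of_pos hb]; ring
      · filter_upwards with s; rw [Real.rpow_def_of_pos hb]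
    have h2 : HasDerivAt (fun s : ℝ => Real.Gamma (s+1)) (-γ) 0 := by
      have hG : HasDerivAt Real.Gamma (-γ) (id (0:ℝ) + 1) := by
        norm_num; exact Real.hasDerivAt_Gamma_one
      exact (hG.comp 0 ((hasDerivAt_id (0:ℝ)).add_const 1)).congr_deriv (mul_one _)
    have := h1.mul h2
    simp only [Real.rpow_zero, mul_one, zero_add, Real.Gamma_one, one_mul] at this
    have hlog : Real.log (1/a) = -Real.log a := by
      rw [one_div, Real.log_inv]
    have e : -Real.log a - γ = Real.log (1/a) + -γ := by rw [hlog]; ring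
    rw [e]; exact this
  have hslope : Tendsto (fun s : ℝ => (h s - 1)/s) (𝓝[>] 0) (𝓝 (-Real.log a - γ)) := by
    have := (hasDerivAt_iff_tendsto_slope.mp hd).mono_left
      (nhdsWithin_mono 0 (fun x hx => ne_of_gt hx))
    refine this.congr (fun s => ?_)
    rw [slope_def_field]
    have h0 : h 0 = 1 := by simp [hh_def]
    rw [h0, sub_zero]
  refine hslope.congr' ?_
  filter_upwards [self_mem_nhdsWithin] with s hs
  have hs0 : s ≠ 0 := ne_of_gt hs
  rw [hh_def]
  simp only
  rw [Real.Gamma_add_one hs0]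
  field_simp

private lemma aux_tendsto_lhs {a : ℝ} (ha : 0 < a) :
    Tendsto (fun s : ℝ => ∫ t in Ioi (0:ℝ),
        t ^ (s-1) * (rexp (-(a*t)) - (Ioc (0:ℝ) 1).indicator (fun _ => (1:ℝ)) t))
      (𝓝[>] 0)
      (𝓝 (∫ t in Ioi (0:ℝ),
        t ^ ((0:ℝ)-1) * (rexp (-(a*t)) - (Ioc (0:ℝ) 1).indicator (fun _ => (1:ℝ)) t))) := by
  apply tendsto_integral_filter_of_dominated_convergence
    (bound := fun t => (Ioc (0:ℝ) 1).indicator (fun _ => a) t + rexp (-(a*t)))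
  · filter_upwards with s
    apply Measurable.aestronglyMeasurable
    exact (measurable_id.pow_const _).mul
      ((Real.measurable_exp.comp (measurable_id.const_mul a).neg).sub
        (measurable_const.indicator measurableSet_Ioc))
  · filter_upwards [Ioo_mem_nhdsGT_of_mem (left_mem_Ico.mpr zero_lt_one)] with s hs
    rw [ae_restrict_iff' measurableSet_Ioi]
    filter_upwards with t ht
    have ht0 : (0:ℝ) < t := ht
    by_cases ht1 : t ≤ 1
    · have htm : t ∈ Ioc (0:ℝ) 1 := ⟨ht0, ht1⟩
      simp only [indicator_of_mem htm]
      have hb1 : |rexp (-(a*t)) - 1| = 1 - rexp (-(a*t)) := by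
        rw [abs_of_nonpos (by simp [Real.exp_le_one_iff]; positivity)]; ring
      rw [Real.norm_eq_abs, abs_mul, abs_of_nonneg (Real.rpow_nonneg ht0.le _), hb1]
      have key : t ^ (s-1) * (1 - rexp (-(a*t))) ≤ a := by
        have h1 : 1 - rexp (-(a*t)) ≤ a*t := by
          have := Real.add_one_le_exp (-(a*t))
          linarith
        have h2 : t ^ (s-1) * (1 - rexp (-(a*t))) ≤ t ^ (s-1) * (a*t) :=
          mul_le_mul_of_nonneg_left h1 (Real.rpow_nonneg ht0.le _)
        have h3 : t ^ (s-1) * (a*t) = a * t ^ s := by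
          rw [show (s:ℝ) = s - 1 + 1 by ring, Real.rpow_add ht0, Real.rpow_one]
          ring_nf
        have h4 : t ^ s ≤ 1 := Real.rpow_le_one ht0.le ht1 (by linarith [hs.1])
        calc t ^ (s-1) * (1 - rexp (-(a*t))) ≤ a * t ^ s := h2.trans_eq h3
          _ ≤ a * 1 := by nlinarith
          _ = a := mul_one a
      have := (Real.exp_pos (-(a*t))).le
      linarith
    · have htm : t ∉ Ioc (0:ℝ) 1 := fun h => ht1 h.2
      simp only [indicator_of_notMem htm, sub_zero]
      rw [Real.norm_eq_abs, abs_mul, abs_of_nonneg (Real.rpow_nonneg ht0.le _),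
        abs_of_pos (Real.exp_pos _)]
      have h1 : t ^ (s-1) ≤ 1 :=
        Real.rpow_le_one_of_one_le_of_nonpos (by linarith) (by linarith [hs.2])
      nlinarith [Real.exp_pos (-(a*t))]
  · apply Integrable.add
    · exact ((integrableOn_const measure_Ioc_lt_top.ne).integrable_indicator
        measurableSet_Ioc).integrableOn
    · exact (exp_neg_integrableOn_Ioi 0 ha).congr_fun
        (fun t _ => by simp only [neg_mul]) measurableSet_Ioi
  · rw [ae_restrict_iff' measurableSet_Ioi]
    filter_upwards with t ht
    have ht0 : (0:ℝ) < t := ht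
    have hc : Tendsto (fun s : ℝ => t ^ (s-1)) (𝓝[>] 0) (𝓝 (t ^ ((0:ℝ)-1))) := by
      have h1 : Tendsto (fun s : ℝ => s - 1) (𝓝 (0:ℝ)) (𝓝 ((0:ℝ)-1)) :=
        tendsto_id.sub tendsto_const_nhds
      exact (((Real.continuousAt_const_rpow (b := (0:ℝ)-1) ht0.ne').tendsto.comp h1)).mono_left
        nhdsWithin_le_nhds
    exact hc.mul_const (rexp (-(a*t)) - (Ioc (0:ℝ) 1).indicator (fun _ => (1:ℝ)) t)

private lemma aux_key_t {a : ℝ} (ha : 0 < a) :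
    ∫ t in Ioi (0:ℝ),
        t ^ ((0:ℝ)-1) * (rexp (-(a*t)) - (Ioc (0:ℝ) 1).indicator (fun _ => (1:ℝ)) t)
      = -Real.log a - γ := by
  refine tendsto_nhds_unique ((aux_tendsto_lhs ha).congr' ?_) (aux_tendsto_rhs ha)
  filter_upwards [self_mem_nhdsWithin] with s hs
  exact aux_phi_eq ha hs

private lemma aux_key_u {a : ℝ} (ha : 0 < a) :
    ∫ u in Ioo (0:ℝ) 1,
        (u ^ a - (Icc (rexp (-1)) 1).indicator (fun _ => (1:ℝ)) u) / (u * Real.log u)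
      = γ + Real.log a := by
  have himg : (fun t : ℝ => rexp (-t)) '' Ioi 0 = Ioo 0 1 := by
    ext u
    constructor
    · rintro ⟨t, ht, rfl⟩
      exact ⟨Real.exp_pos _, by rw [Real.exp_lt_one_iff]; simpa using (ht : (0:ℝ) < t)⟩
    · intro hu
      exact ⟨-Real.log u, Set.mem_Ioi.mpr (neg_pos.mpr (Real.log_neg hu.1 hu.2)),
        by simp [Real.exp_log hu.1]⟩
  have hderiv : ∀ t ∈ Ioi (0:ℝ),
      HasDerivWithinAt (fun t : ℝ => rexp (-t)) (-rexp (-t)) (Ioi 0) t := by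
    intro t _
    have : HasDerivAt (fun t : ℝ => rexp (-t)) (rexp (-t) * (-1)) t :=
      (Real.hasDerivAt_exp (-t)).comp t (hasDerivAt_neg t)
    simpa using this.hasDerivWithinAt
  have hinj : InjOn (fun t : ℝ => rexp (-t)) (Ioi 0) :=
    (Real.exp_injective.comp neg_injective).injOn
  rw [← himg, integral_image_eq_integral_abs_deriv_smul measurableSet_Ioi hderiv hinj]
  have heq : ∀ t ∈ Ioi (0:ℝ),
      |(-rexp (-t))| • (((rexp (-t)) ^ a
          - (Icc (rexp (-1)) 1).indicator (fun _ => (1:ℝ)) (rexp (-t)))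
        / (rexp (-t) * Real.log (rexp (-t))))
      = -(t ^ ((0:ℝ)-1) * (rexp (-(a*t)) - (Ioc (0:ℝ) 1).indicator (fun _ => (1:ℝ)) t)) := by
    intro t ht
    have ht0 : (0:ℝ) < t := ht
    have hexp : (rexp (-t)) ^ a = rexp (-(a*t)) := by
      rw [← Real.exp_mul]; ring_nf
    have hind : (Icc (rexp (-1)) 1).indicator (fun _ => (1:ℝ)) (rexp (-t))
        = (Ioc (0:ℝ) 1).indicator (fun _ => (1:ℝ)) t := by
      by_cases ht1 : t ≤ 1
      · have hm1 : rexp (-t) ∈ Icc (rexp (-1)) 1 :=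
          ⟨Real.exp_le_exp.mpr (by linarith), Real.exp_le_one_iff.mpr (by linarith)⟩
        have hm2 : t ∈ Ioc (0:ℝ) 1 := ⟨ht0, ht1⟩
        rw [indicator_of_mem hm1, indicator_of_mem hm2]
      · have hm1 : rexp (-t) ∉ Icc (rexp (-1)) 1 := by
          intro h
          have := Real.exp_le_exp.mp h.1
          linarith
        have hm2 : t ∉ Ioc (0:ℝ) 1 := fun h => ht1 h.2
        rw [indicator_of_notMem hm1, indicator_of_notMem hm2]
    rw [Real.log_exp, abs_neg, abs_of_pos (Real.exp_pos _), smul_eq_mul, hexp, hind,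
      Real.rpow_sub ht0, Real.rpow_zero, Real.rpow_one]
    have he : rexp (-t) ≠ 0 := (Real.exp_pos _).ne'
    field_simp
  rw [setIntegral_congr_fun measurableSet_Ioi heq, integral_neg, aux_key_t ha]
  ring

/-- for an extreme-value copula `C` with Pickands dependence
function `A` (so that `C(u^{w₁},…,u^{w_d}) = u^{A(w)}` along power curves), the
map `ν` of the paper recovers `A`:
`exp[−γ + ∫₀¹ {C(u^{w₁},…,u^{w_d}) − 1(u ∈ [e^{−1},1])} du/(u ln u)] = A(w)`,
where `γ` is the Euler–Mascheroni constant. -/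
theorem nu_of_extreme_value_copula_eq_pickands
    (d : ℕ) (hd : 1 ≤ d)
    (C : (Fin d → ℝ) → ℝ) (A : (Fin d → ℝ) → ℝ)
    (w : Fin d → ℝ) (hw0 : ∀ j, 0 ≤ w j) (hw1 : (∑ j, w j) = 1)
    (hA : A w ∈ Set.Icc (1 / d : ℝ) 1)
    (hC : ∀ t : ℝ, t ∈ Set.Ioo (0:ℝ) 1 → C (fun j => t ^ w j) = t ^ A w) :
    Real.exp (-Real.eulerMascheroniConstant +
        ∫ u in Set.Ioo (0:ℝ) 1,
          (C (fun j => u ^ w j)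
            - Set.indicator (Set.Icc (Real.exp (-1)) 1) (fun _ => (1:ℝ)) u)
            / (u * Real.log u))
      = A w := by
  have hd' : (0:ℝ) < 1 / d := by
    have : (0:ℝ) < d := by exact_mod_cast Nat.lt_of_lt_of_le Nat.zero_lt_one hd
    positivity
  have ha : 0 < A w := lt_of_lt_of_le hd' hA.1
  have hcong : ∫ u in Set.Ioo (0:ℝ) 1,
      (C (fun j => u ^ w j)
        - Set.indicator (Set.Icc (Real.exp (-1)) 1) (fun _ => (1:ℝ)) u) / (u * Real.log u)
      = ∫ u in Set.Ioo (0:ℝ) 1,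
      (u ^ A w
        - Set.indicator (Set.Icc (Real.exp (-1)) 1) (fun _ => (1:ℝ)) u) / (u * Real.log u) :=
    setIntegral_congr_fun measurableSet_Ioo (fun u hu => by rw [hC u hu])
  rw [hcong, aux_key_u ha, neg_add_cancel_left, Real.exp_log ha]
end
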